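/- Each of the communication models bag, p2p, causal, and synch is RegSC: for each such model Com there exists an NFA over actions accepting exactly the set {e ∈ Exec(RSC) | msc(e) ∈ MSC(Com)} of RSC executions whose MSC is linearisable in Com. -/

import Mathlib

/-! ## Common definitions: actions, executions, MSCs, communication models,
communicating finite state machines, and global types. -/

/-- Actions: a send `p▷q!m` or a receive `p▷q?m`. -/
inductive Act (P M : Type) : Type where
  | snd (p q : P) (m : M)
  | rcv (p q : P) (m : M)
deriving DecidableEq

namespace Act
variable {P M : Type}

/-- The process executing an action: a send belongs to the sender,
a receive belongs to the receiver. -/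
def proc : Act P M → P
  | .snd p _ _ => p
  | .rcv _ q _ => q

end Act

/-- Raw executions: a word of actions together with a source function on positions. -/
structure Exec (P M : Type) : Type where
  w : List (Act P M)
  src : ℕ → ℕ

namespace Exec
variable {P M : Type}

def act? (e : Exec P M) (i : ℕ) : Option (Act P M) := e.w[i]?

def IsSend (e : Exec P M) (i : ℕ) : Prop := ∃ p q m, e.act? i = some (.snd p q m)

def IsRecv (e : Exec P M) (i : ℕ) : Prop := ∃ p q m, e.act? i = some (.rcv p q m)

/-- Well-formedness of an execution: each receive event `r` labelled `p▷q?m` has a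
source send event `src r < r` labelled `p▷q!m`, and `src` is injective on receive events. -/
def WF (e : Exec P M) : Prop :=
  (∀ i p q m, e.act? i = some (.rcv p q m) →
    e.src i < i ∧ e.act? (e.src i) = some (.snd p q m)) ∧
  (∀ i j, e.IsRecv i → e.IsRecv j → e.src i = e.src j → i = j)

/-- A send event is matched if it is the source of some receive event. -/
def Matched (e : Exec P M) (s : ℕ) : Prop := ∃ r, e.IsRecv r ∧ e.src r = s

def OrphanFree (e : Exec P M) : Prop := ∀ s, e.IsSend s → e.Matched s

/-- Prefix of executions: the word is a prefix and the source functions agree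
on the receive events of the shorter one. -/
def IsPrefix (e₁ e₂ : Exec P M) : Prop :=
  e₁.w <+: e₂.w ∧ ∀ i, e₁.IsRecv i → e₁.src i = e₂.src i

/-- Projection of an execution onto the actions of a process. -/
def proj (e : Exec P M) [DecidableEq P] (p : P) : List (Act P M) :=
  e.w.filter (fun a => decide (a.proc = p))

/-- The MSC event `(process, index within the process)` at a position of the word. -/
def evOf (e : Exec P M) [DecidableEq P] (i : ℕ) : Option (P × ℕ) :=
  (e.act? i).map
    (fun a => (a.proc, ((e.w.take i).filter (fun b => decide (b.proc = a.proc))).length))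

/-- The position in the word of the `i`-th event of process `p`. -/
def posOf (e : Exec P M) [DecidableEq P] (ev : P × ℕ) : ℕ :=
  ((List.range e.w.length).filter
    (fun k => decide ((e.act? k).map Act.proc = some ev.1))).getD ev.2 0

end Exec

/-- Raw MSCs: a word of actions per process, and a source function on events. -/
structure MSC (P M : Type) : Type where
  w : P → List (Act P M)
  src : P × ℕ → P × ℕ

namespace MSC
variable {P M : Type}

def act? (Mm : MSC P M) (ev : P × ℕ) : Option (Act P M) := (Mm.w ev.1)[ev.2]?

def IsSend (Mm : MSC P M) (ev : P × ℕ) : Prop := ∃ p q m, Mm.act? ev = some (.snd p q m)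

def IsRecv (Mm : MSC P M) (ev : P × ℕ) : Prop := ∃ p q m, Mm.act? ev = some (.rcv p q m)

/-- Well-formedness of an MSC. -/
def WF (Mm : MSC P M) : Prop :=
  (∀ p, ∀ a ∈ Mm.w p, a.proc = p) ∧
  (∀ ev p q m, Mm.act? ev = some (.rcv p q m) → Mm.act? (Mm.src ev) = some (.snd p q m)) ∧
  (∀ ev ev', Mm.IsRecv ev → Mm.IsRecv ev' → Mm.src ev = Mm.src ev' → ev = ev')

/-- Basic happens-before steps: process order and message order. -/
inductive hbBase (Mm : MSC P M) : P × ℕ → P × ℕ → Prop where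
  | proc (p : P) (i j : ℕ) : i < j → j < (Mm.w p).length → hbBase Mm (p, i) (p, j)
  | msg (ev : P × ℕ) : Mm.IsRecv ev → hbBase Mm (Mm.src ev) ev

/-- The happens-before relation: least transitive relation containing the basic steps. -/
def hb (Mm : MSC P M) : P × ℕ → P × ℕ → Prop := Relation.TransGen (hbBase Mm)

/-- Prefix of MSCs. -/
def IsPrefix (M₁ M₂ : MSC P M) : Prop :=
  (∀ p, M₁.w p <+: M₂.w p) ∧ ∀ ev, M₁.IsRecv ev → M₁.src ev = M₂.src ev

end MSC

/-- Prefix closure of a set of MSCs. -/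
def prefSet {P M : Type} (X : Set (MSC P M)) : Set (MSC P M) :=
  {Mm | ∃ M' ∈ X, Mm.IsPrefix M'}

/-- The MSC of an execution: project onto each process and lift the source function. -/
def Exec.toMSC {P M : Type} [DecidableEq P] (e : Exec P M) : MSC P M where
  w p := e.w.filter (fun a => decide (a.proc = p))
  src ev := (e.evOf (e.src (e.posOf ev))).getD ev

/-- The linearisations of an MSC, identified with the executions they induce. -/
def lin {P M : Type} [DecidableEq P] (Mm : MSC P M) : Set (Exec P M) :=
  {e | e.WF ∧ e.toMSC = Mm}

/-- The linearisations of an MSC lying in a communication model. -/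
def linC {P M : Type} [DecidableEq P] (Com : Set (Exec P M)) (Mm : MSC P M) :
    Set (Exec P M) :=
  lin Mm ∩ Com

/-- A communication model (a set of executions) is causally closed if whenever an MSC
has a linearisation in the model, all its linearisations are in the model. -/
def CausallyClosed {P M : Type} [DecidableEq P] (Com : Set (Exec P M)) : Prop :=
  ∀ Mm : MSC P M, (linC Com Mm).Nonempty → linC Com Mm = lin Mm

/-- The MSCs linearisable in a communication model. -/
def MSCModel {P M : Type} [DecidableEq P] (Com : Set (Exec P M)) : Set (MSC P M) :=
  {Mm | (linC Com Mm).Nonempty}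

/-- The bag communication model: all executions. -/
def bag {P M : Type} : Set (Exec P M) := {e | e.WF}

/-- The synchronous communication model: every send is immediately followed by
its matching receive. -/
def synch {P M : Type} : Set (Exec P M) :=
  {e | e.WF ∧ ∀ s, e.IsSend s → e.IsRecv (s + 1) ∧ e.src (s + 1) = s}

/-- The peer-to-peer communication model. -/
def p2p {P M : Type} : Set (Exec P M) :=
  {e | e.WF ∧ ∀ s₁ s₂ p q m₁ m₂,
    e.act? s₁ = some (.snd p q m₁) → e.act? s₂ = some (.snd p q m₂) → s₁ < s₂ →
    (¬ e.Matched s₂ ∨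
      ∃ r₁ r₂, r₁ < r₂ ∧ e.IsRecv r₁ ∧ e.IsRecv r₂ ∧ e.src r₁ = s₁ ∧ e.src r₂ = s₂)}

/-- Happens-before between positions of an execution, through its MSC. -/
def Exec.hbM {P M : Type} [DecidableEq P] (e : Exec P M) (i j : ℕ) : Prop :=
  ∃ ev₁ ev₂, e.evOf i = some ev₁ ∧ e.evOf j = some ev₂ ∧ e.toMSC.hb ev₁ ev₂

/-- The causally ordered communication model. -/
def causal {P M : Type} [DecidableEq P] : Set (Exec P M) :=
  {e | e.WF ∧ ∀ s₁ s₂ p₁ p₂ q m₁ m₂,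
    e.act? s₁ = some (.snd p₁ q m₁) → e.act? s₂ = some (.snd p₂ q m₂) → e.hbM s₁ s₂ →
    (¬ e.Matched s₂ ∨
      ∃ r₁ r₂, e.hbM r₁ r₂ ∧ e.IsRecv r₁ ∧ e.IsRecv r₂ ∧ e.src r₁ = s₁ ∧ e.src r₂ = s₂)}

/-- A communicating finite state machine: an NFA with ε-transitions
(over the actions of a process) with finitely many states. -/
structure CFSM (A : Type) : Type 1 where
  State : Type
  fin : Fintype State
  aut : εNFA A State

instance {A : Type} (c : CFSM A) : Fintype c.State := c.fin

/-- The machine obtained by making all states accepting. -/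
def CFSM.up {A : Type} (c : CFSM A) : CFSM A :=
  ⟨c.State, c.fin, { c.aut with accept := Set.univ }⟩

/-- Making all states of all machines of a system accepting. -/
def sysUp {P M : Type} (S : P → CFSM (Act P M)) : P → CFSM (Act P M) :=
  fun p => (S p).up

/-- `Exec(S, Com)`: the executions of a system of CFSMs in a communication model. -/
def ExecSys {P M : Type} [DecidableEq P] (S : P → CFSM (Act P M)) (Com : Set (Exec P M)) :
    Set (Exec P M) :=
  {e | e ∈ Com ∧ ∀ p, e.proj p ∈ (S p).aut.accepts}

/-- `MSC(S, Com)`: the MSCs of the executions of a system of CFSMs. -/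
def MSCSys {P M : Type} [DecidableEq P] (S : P → CFSM (Act P M)) (Com : Set (Exec P M)) :
    Set (MSC P M) :=
  Exec.toMSC '' ExecSys S Com

/-- A system is deadlock-free for `Com` if every execution of the system with all states
accepting is a prefix of an accepting execution of the system. -/
def DeadlockFree {P M : Type} [DecidableEq P] (S : P → CFSM (Act P M))
    (Com : Set (Exec P M)) : Prop :=
  ∀ e ∈ ExecSys (sysUp S) Com, ∃ e' ∈ ExecSys S Com, e.IsPrefix e'

/-- A system is orphan-free for `Com` if all its executions are orphan-free. -/
def SysOrphanFree {P M : Type} [DecidableEq P] (S : P → CFSM (Act P M))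
    (Com : Set (Exec P M)) : Prop :=
  ∀ e ∈ ExecSys S Com, e.OrphanFree

/-- An arrow `p→q:m` with `p ≠ q`. -/
def Arrow (P M : Type) : Type := {x : P × P × M // x.1 ≠ x.2.1}

namespace Arrow
variable {P M : Type}

def sender (a : Arrow P M) : P := a.1.1
def receiver (a : Arrow P M) : P := a.1.2.1
def msg (a : Arrow P M) : M := a.1.2.2
def sendAct (a : Arrow P M) : Act P M := .snd a.sender a.receiver a.msg
def recvAct (a : Arrow P M) : Act P M := .rcv a.sender a.receiver a.msg

/-- Two arrows commute when their pairs of processes are disjoint. -/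
def Commutes (a b : Arrow P M) : Prop :=
  a.sender ≠ b.sender ∧ a.sender ≠ b.receiver ∧
    a.receiver ≠ b.sender ∧ a.receiver ≠ b.receiver

instance [DecidableEq P] [Fintype P] [Fintype M] : Fintype (Arrow P M) :=
  Subtype.fintype _

end Arrow

/-- A global type: a deterministic finite (possibly partial) automaton over arrows. -/
structure GType (P M : Type) : Type 1 where
  State : Type
  fin : Fintype State
  step : State → Arrow P M → Option State
  start : State
  accept : Set State

instance {P M : Type} (G : GType P M) : Fintype G.State := G.fin

namespace GType
variable {P M : Type}

def evalFrom (G : GType P M) (s : Option G.State) (w : List (Arrow P M)) : Option G.State :=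
  w.foldl (fun s a => s.bind (fun q => G.step q a)) s

/-- The word language of a global type. -/
def lang (G : GType P M) : Set (List (Arrow P M)) :=
  {w | ∃ s, G.evalFrom (some G.start) w = some s ∧ s ∈ G.accept}

/-- The arrows labelling the outgoing transitions of a state. -/
def choices (G : GType P M) (s : G.State) : Set (Arrow P M) := {a | (G.step s a).isSome}

/-- Commutation-determinism: no two arrows available at a same state commute. -/
def CommDet (G : GType P M) : Prop :=
  ∀ s : G.State, ∀ a ∈ G.choices s, ∀ b ∈ G.choices s, ¬ a.Commutes b

/-- Sender-driven choice: all arrows available at a same state have the same sender. -/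
def SenderDriven (G : GType P M) : Prop :=
  ∀ s : G.State, ∀ a ∈ G.choices s, ∀ b ∈ G.choices s, a.sender = b.sender

end GType

/-- The synchronous execution coded by a sequence of arrows. -/
def execOfArrows {P M : Type} (w : List (Arrow P M)) : Exec P M where
  w := (w.map (fun a => [a.sendAct, a.recvAct])).flatten
  src := fun i => i - 1

/-- The MSC coded by a sequence of arrows. -/
def mscOfArrows {P M : Type} [DecidableEq P] (w : List (Arrow P M)) : MSC P M :=
  (execOfArrows w).toMSC

/-- The set of MSCs of sequences of arrows (MSCs linearisable in the synchronous model). -/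
def MSCsynch (P M : Type) [DecidableEq P] : Set (MSC P M) :=
  Set.range (mscOfArrows (P := P) (M := M))

/-- The existential MSC language of a global type. -/
def Lexists {P M : Type} [DecidableEq P] (G : GType P M) : Set (MSC P M) :=
  mscOfArrows '' G.lang

/-- The universal MSC language of a global type. -/
def Lforall {P M : Type} [DecidableEq P] (G : GType P M) : Set (MSC P M) :=
  {Mm | (∃ w, mscOfArrows w = Mm) ∧ ∀ w, mscOfArrows w = Mm → w ∈ G.lang}

/-- A global type is commutation-closed when its existential and universal MSC
languages coincide. -/
def GType.CommClosed {P M : Type} [DecidableEq P] (G : GType P M) : Prop :=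
  Lexists G = Lforall G

/-- The relabelling of an arrow for the projection onto process `p`. -/
def projLabel {P M : Type} [DecidableEq P] (p : P) (a : Arrow P M) : Option (Act P M) :=
  if a.sender = p then some a.sendAct
  else if a.receiver = p then some a.recvAct
  else none

/-- The projected system of CFSMs of a global type. -/
def projG {P M : Type} [DecidableEq P] (G : GType P M) : P → CFSM (Act P M) :=
  fun p =>
    ⟨G.State, G.fin,
      { step := fun s oa =>
          {s' | ∃ arr : Arrow P M, G.step s arr = some s' ∧ projLabel p arr = oa},
        start := {G.start},
        accept := G.accept }⟩

/-- `Exec(G, Com)`: the semantics of a global type in a communication model. -/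
def ExecG {P M : Type} [DecidableEq P] (G : GType P M) (Com : Set (Exec P M)) :
    Set (Exec P M) :=
  {e | ∃ Mm ∈ Lexists G, e ∈ linC Com Mm}

/-- Deadlock-free realisability of a global type in a communication model:
(CC) conformance and (DF) deadlock freedom of the projected system. -/
def DFRealisable {P M : Type} [DecidableEq P] (G : GType P M) (Com : Set (Exec P M)) : Prop :=
  ExecSys (projG G) Com = ExecG G Com ∧ DeadlockFree (projG G) Com

/-- The synchronous product of a system of CFSMs: an ε-NFA over arrows. -/
def syncProd {P M : Type} (S : P → CFSM (Act P M)) :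
    εNFA (Arrow P M) (∀ p, (S p).State) where
  step st oa :=
    match oa with
    | some a =>
        {st' | st' a.sender ∈ (S a.sender).aut.step (st a.sender) (some a.sendAct) ∧
               st' a.receiver ∈ (S a.receiver).aut.step (st a.receiver) (some a.recvAct) ∧
               ∀ r, r ≠ a.sender → r ≠ a.receiver → st' r = st r}
    | none =>
        {st' | ∃ p, st' p ∈ (S p).aut.step (st p) none ∧ ∀ r, r ≠ p → st' r = st r}
  start := {st | ∀ p, st p ∈ (S p).aut.start}
  accept := {st | ∀ p, st p ∈ (S p).aut.accept}

/-- `prod(S)`: the powerset determinisation of the synchronous product, a global type. -/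
noncomputable def prodG {P M : Type} [Fintype P] (S : P → CFSM (Act P M)) : GType P M :=
  let A := (syncProd S).toNFA.toDFA
  { State := Set (∀ p, (S p).State)
    fin := by
      haveI : Finite (∀ p, (S p).State) := inferInstance
      exact Fintype.ofFinite _
    step := fun s a => some (A.step s a)
    start := A.start
    accept := A.accept }

/-- The product `G₁ ⊗ G₂` of two global types (language intersection). -/
def prodGT {P M : Type} (G₁ G₂ : GType P M) : GType P M where
  State := G₁.State × G₂.State
  fin := inferInstance
  step s a := (G₁.step s.1 a).bind fun q₁ => (G₂.step s.2 a).map fun q₂ => (q₁, q₂)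
  start := (G₁.start, G₂.start)
  accept := {s | s.1 ∈ G₁.accept ∧ s.2 ∈ G₂.accept}

/-- The dual of a global type: complete it and swap accepting and non-accepting states. -/
def dualG {P M : Type} (G : GType P M) : GType P M where
  State := Option G.State
  fin := inferInstance
  step s a := some (s.bind fun q => G.step q a)
  start := some G.start
  accept := {s | ∀ q, s = some q → q ∉ G.accept}

/-- RSC executions: every receive immediately follows its source send. -/
def RSCexec {P M : Type} : Set (Exec P M) :=
  {e | e.WF ∧ ∀ r, e.IsRecv r → e.src r = r - 1}

/-- The MSCs admitting an RSC linearisation. -/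
def MSCrsc {P M : Type} [DecidableEq P] : Set (MSC P M) :=
  {Mm | ∃ e ∈ RSCexec (P := P) (M := M), e.toMSC = Mm}

/-- A set of MSCs is RegSC if some NFA over actions accepts exactly the RSC executions
whose MSC belongs to the set. -/
def RegSCset {P M : Type} [DecidableEq P] (X : Set (MSC P M)) : Prop :=
  ∃ (σ : Type) (_ : Fintype σ) (A : NFA (Act P M) σ),
    ∀ w : List (Act P M),
      w ∈ A.accepts ↔ ∃ e ∈ RSCexec (P := P) (M := M), e.w = w ∧ e.toMSC ∈ X

/-- A communication model is RegSC if the set of its RSC-linearisable MSCs is RegSC. -/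
def RegSCmodel {P M : Type} [DecidableEq P] (Com : Set (Exec P M)) : Prop :=
  RegSCset (MSCModel Com ∩ MSCrsc)

/-!
An RSC execution is determined by its word up to the junk values of `src` on sends, and its
happens-before relation can be read off the word. Matching the events of an arbitrary
linearisation of its MSC with those of the RSC execution shows that the MSC is linearisable in
`p2p` iff no unmatched send from `p` to `q` precedes a matched one, in `causal` iff no unmatched
send to `q` causally precedes a matched one, in `synch` iff every send is matched, and in `bag`
always. Each condition is checked by a finite automaton that remembers the last letter and,
respectively, the pairs `(p, q)` with an unmatched send from `p` to `q`, or the pairs `(q, r)`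
such that an unmatched send to `q` causally precedes an event of `r`.
-/

theorem List.getElem?_filter_range (pred : ℕ → Bool) {n i : ℕ} (hi : i < n) (hp : pred i = true) :
    ((List.range n).filter pred)[((List.range i).filter pred).length]? = some i := by
  rw [show n = (i + 1) + (n - (i + 1)) by omega, List.range_add, List.filter_append,
    List.range_succ, List.filter_append, List.append_assoc,
    List.getElem?_append_right le_rfl]
  simp [hp]

theorem List.getLast?_eq_some_iff_getElem? {α : Type*} {l : List α} {b : α} :
    l.getLast? = some b ↔ 0 < l.length ∧ l[l.length - 1]? = some b := by
  rw [List.getLast?_eq_getElem?]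
  exact ⟨fun h => ⟨by have := (List.getElem?_eq_some_iff.1 h).1; omega, h⟩, And.right⟩

def MSC.Matched {P M : Type} (Mm : MSC P M) (ev : P × ℕ) : Prop :=
  ∃ rv, Mm.IsRecv rv ∧ Mm.src rv = ev

namespace Exec

variable {P M : Type} [DecidableEq P]

def procCount (w : List (Act P M)) (i : ℕ) (p : P) : ℕ :=
  ((w.take i).filter (fun b => decide (b.proc = p))).length

theorem procCount_eq_length_filter_range (e : Exec P M) (p : P) {i : ℕ}
    (hi : i ≤ e.w.length) :
    procCount e.w i p
      = ((List.range i).filter (fun k => decide ((e.act? k).map Act.proc = some p))).length := by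
  induction i with
  | zero => simp [procCount]
  | succ i ih =>
    have hw : e.act? i = some e.w[i] := List.getElem?_eq_getElem (by omega)
    rw [List.range_succ, List.filter_append, List.length_append, ← ih (by omega), procCount,
      List.take_add_one, List.filter_append, List.length_append]
    simp only [Exec.act?] at hw
    by_cases h : e.w[i].proc = p <;> simp [h, hw, procCount, Exec.act?]

theorem procCount_mono (w : List (Act P M)) (p : P) {i j : ℕ} (hij : i ≤ j) :
    procCount w i p ≤ procCount w j p :=
  ((List.take_prefix_take_left hij).sublist.filter _).length_le

theorem procCount_succ {w : List (Act P M)} {i : ℕ} {a : Act P M} (h : w[i]? = some a) :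
    procCount w (i + 1) a.proc = procCount w i a.proc + 1 := by
  simp [procCount, List.take_add_one, h]

theorem procCount_cons_succ (b : Act P M) (w : List (Act P M)) (i : ℕ) (p : P) :
    procCount (b :: w) (i + 1) p = procCount w i p + if b.proc = p then 1 else 0 := by
  by_cases h : b.proc = p <;> simp [procCount, h]

theorem exists_procCount_eq_of_getElem?_filter {w : List (Act P M)} {p : P} {k : ℕ}
    {a : Act P M} (h : (w.filter (fun b => decide (b.proc = p)))[k]? = some a) :
    ∃ i, w[i]? = some a ∧ a.proc = p ∧ procCount w i p = k := by
  induction w generalizing k with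
  | nil => simp at h
  | cons b w ih =>
    by_cases hb : b.proc = p
    · rw [List.filter_cons_of_pos (by simpa using hb)] at h
      cases k with
      | zero => exact ⟨0, by simpa using h, by simp at h; rwa [← h], by simp [procCount]⟩
      | succ k =>
        obtain ⟨i, hi, hap, hk⟩ := ih (by simpa using h)
        exact ⟨i + 1, by simpa using hi, hap, by rw [procCount_cons_succ, hk, if_pos hb]⟩
    · rw [List.filter_cons_of_neg (by simpa using hb)] at h
      obtain ⟨i, hi, hap, hk⟩ := ih h
      exact ⟨i + 1, by simpa using hi, hap, by rw [procCount_cons_succ, hk, if_neg hb]; rfl⟩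

theorem procCount_lt_procCount_iff {w : List (Act P M)} {i j : ℕ} {a : Act P M}
    (ha : w[i]? = some a) :
    procCount w i a.proc < procCount w j a.proc ↔ i < j := by
  constructor
  · intro h
    by_contra hji
    exact (procCount_mono w a.proc (not_lt.1 hji)).not_gt h
  · intro hij
    have := procCount_mono w a.proc (show i + 1 ≤ j from hij)
    rw [procCount_succ ha] at this
    omega

theorem evOf_eq {e : Exec P M} {i : ℕ} {a : Act P M} (h : e.act? i = some a) :
    e.evOf i = some (a.proc, procCount e.w i a.proc) := by
  simp [Exec.evOf, procCount, h]

theorem toMSC_act?_eq {e : Exec P M} {i : ℕ} {a : Act P M} (h : e.act? i = some a) :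
    e.toMSC.act? (a.proc, procCount e.w i a.proc) = some a := by
  have hi : i < e.w.length := (List.getElem?_eq_some_iff.1 h).1
  have hsplit : e.w.filter (fun b => decide (b.proc = a.proc))
      = (e.w.take i).filter (fun b => decide (b.proc = a.proc))
        ++ a :: (e.w.drop (i + 1)).filter (fun b => decide (b.proc = a.proc)) := by
    conv_lhs => rw [← List.take_append_drop i e.w, List.drop_eq_getElem_cons hi,
      (List.getElem?_eq_some_iff.1 h).2]
    simp
  show (e.w.filter _)[procCount e.w i a.proc]? = some a
  rw [hsplit, procCount, List.getElem?_append_right le_rfl]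
  simp

theorem posOf_evOf {e : Exec P M} {i : ℕ} {a : Act P M} (h : e.act? i = some a) :
    e.posOf (a.proc, procCount e.w i a.proc) = i := by
  have hi : i < e.w.length := (List.getElem?_eq_some_iff.1 h).1
  rw [Exec.posOf, List.getD_eq_getElem?_getD, procCount_eq_length_filter_range e a.proc hi.le,
    List.getElem?_filter_range _ hi (by simp [h])]
  rfl

theorem evOf_eq_some_iff {e : Exec P M} {i : ℕ} {ev : P × ℕ} :
    e.evOf i = some ev ↔ ∃ a, e.act? i = some a ∧ ev = (a.proc, procCount e.w i a.proc) := by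
  unfold Exec.evOf procCount
  rw [Option.map_eq_some_iff]
  exact exists_congr fun _ => and_congr_right fun _ => eq_comm

theorem eq_of_evOf_eq {e : Exec P M} {i j : ℕ} {ev : P × ℕ} (hi : e.evOf i = some ev)
    (hj : e.evOf j = some ev) : i = j := by
  obtain ⟨a, ha, rfl⟩ := evOf_eq_some_iff.1 hi
  obtain ⟨b, hb, hev⟩ := evOf_eq_some_iff.1 hj
  rw [← posOf_evOf ha, hev, posOf_evOf hb]

theorem exists_evOf_eq_of_toMSC_act? {e : Exec P M} {ev : P × ℕ} {a : Act P M}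
    (h : e.toMSC.act? ev = some a) : ∃ i, e.act? i = some a ∧ e.evOf i = some ev := by
  obtain ⟨i, hi, hap, hk⟩ := exists_procCount_eq_of_getElem?_filter h
  exact ⟨i, hi, by rw [evOf_eq hi, hap, hk]⟩

theorem toMSC_src_eq {e : Exec P M} (hwf : e.WF) {r : ℕ} {p q : P} {m : M}
    (h : e.act? r = some (.rcv p q m)) :
    e.toMSC.src (q, procCount e.w r q) = (p, procCount e.w (e.src r) p) := by
  have hpos : e.posOf (q, procCount e.w r q) = r := posOf_evOf h
  show (e.evOf (e.src (e.posOf _))).getD _ = _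
  rw [hpos, evOf_eq (hwf.1 r p q m h).2]
  rfl

theorem matched_iff_toMSC_matched {e : Exec P M} (hwf : e.WF) {s : ℕ} {a : Act P M}
    (hs : e.act? s = some a) :
    e.Matched s ↔ e.toMSC.Matched (a.proc, procCount e.w s a.proc) := by
  constructor
  · rintro ⟨r, ⟨p, q, m, hr⟩, rfl⟩
    obtain rfl : a = .snd p q m := Option.some_injective _ (hs.symm.trans (hwf.1 r p q m hr).2)
    exact ⟨(q, procCount e.w r q), ⟨p, q, m, toMSC_act?_eq hr⟩, toMSC_src_eq hwf hr⟩
  · rintro ⟨rv, ⟨p, q, m, hrv⟩, hsrc⟩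
    obtain ⟨r, hr, hevr⟩ := exists_evOf_eq_of_toMSC_act? hrv
    rw [evOf_eq hr] at hevr
    cases hevr
    rw [show (Act.rcv p q m).proc = q from rfl, toMSC_src_eq hwf hr] at hsrc
    refine ⟨r, ⟨p, q, m, hr⟩, eq_of_evOf_eq (evOf_eq (hwf.1 r p q m hr).2) ?_⟩
    rw [evOf_eq hs, ← hsrc]
    rfl

theorem exists_pos_of_toMSC_eq {e e' : Exec P M} (hwf : e.WF) (hwf' : e'.WF)
    (hM : e'.toMSC = e.toMSC) {s : ℕ} {a : Act P M} (hs : e.act? s = some a) :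
    ∃ s', e'.act? s' = some a ∧ procCount e'.w s' a.proc = procCount e.w s a.proc ∧
      (e.Matched s ↔ e'.Matched s') := by
  have hMa := toMSC_act?_eq hs
  rw [← hM] at hMa
  obtain ⟨s', hs', hev'⟩ := exists_evOf_eq_of_toMSC_act? hMa
  have hk : procCount e'.w s' a.proc = procCount e.w s a.proc := by
    rw [evOf_eq hs'] at hev'
    exact (Prod.ext_iff.1 (Option.some_injective _ hev')).2
  refine ⟨s', hs', hk, ?_⟩
  rw [matched_iff_toMSC_matched hwf hs, matched_iff_toMSC_matched hwf' hs', hk, hM]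

end Exec

section RSCWord

variable {P M : Type}

def IsRSCWord (w : List (Act P M)) : Prop :=
  ∀ i p q m, w[i]? = some (.rcv p q m) → ∃ j, i = j + 1 ∧ w[j]? = some (.snd p q m)

def Exec.ofWord (w : List (Act P M)) : Exec P M := ⟨w, fun i => i - 1⟩

theorem isRSCWord_of_mem_RSCexec {e : Exec P M} (he : e ∈ RSCexec) : IsRSCWord e.w := by
  intro i p q m h
  refine ⟨i - 1, by have := (he.1.1 i p q m h).1; omega, ?_⟩
  rw [← he.2 i ⟨p, q, m, h⟩]
  exact (he.1.1 i p q m h).2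

theorem Exec.ofWord_mem_RSCexec {w : List (Act P M)} (h : IsRSCWord w) :
    Exec.ofWord w ∈ RSCexec := by
  refine ⟨⟨fun i p q m hi => ?_, ?_⟩, fun _ _ => rfl⟩
  · obtain ⟨j, rfl, hj⟩ := h i p q m hi
    exact ⟨by simp [Exec.ofWord], by simpa [Exec.ofWord, Exec.act?] using hj⟩
  · rintro i j ⟨p, q, m, hi⟩ ⟨p', q', m', hj⟩ hij
    obtain ⟨i, rfl, -⟩ := h _ p q m hi
    obtain ⟨j, rfl, -⟩ := h _ p' q' m' hj
    simp only [Exec.ofWord] at hij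
    omega

theorem matched_iff_of_mem_RSCexec {e : Exec P M} (he : e ∈ RSCexec) {s : ℕ} {p q : P}
    {m : M} (hs : e.act? s = some (.snd p q m)) :
    e.Matched s ↔ e.w[s + 1]? = some (.rcv p q m) := by
  constructor
  · rintro ⟨r, ⟨p', q', m', hr⟩, rfl⟩
    obtain ⟨hlt, hsnd⟩ := he.1.1 r p' q' m' hr
    obtain ⟨rfl, rfl, rfl⟩ : p' = p ∧ q' = q ∧ m' = m := by
      simpa using hsnd.symm.trans hs
    rwa [he.2 r ⟨p', q', m', hr⟩, show r - 1 + 1 = r by omega]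
  · intro h
    exact ⟨s + 1, ⟨p, q, m, h⟩, he.2 (s + 1) ⟨p, q, m, h⟩⟩

/-- Happens-before steps of an RSC execution, read off its word: a message edge joins a send to
the receive right after it. -/
inductive WordHbStep (w : List (Act P M)) : ℕ → ℕ → Prop
  | proc {i j : ℕ} {a b : Act P M} : i < j → w[i]? = some a → w[j]? = some b →
      a.proc = b.proc → WordHbStep w i j
  | msg {i : ℕ} {p q : P} {m : M} : w[i]? = some (.snd p q m) →
      w[i + 1]? = some (.rcv p q m) → WordHbStep w i (i + 1)

def WordHb (w : List (Act P M)) : ℕ → ℕ → Prop := Relation.TransGen (WordHbStep w)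

theorem WordHbStep.lt {w : List (Act P M)} {i j : ℕ} (h : WordHbStep w i j) : i < j := by
  cases h with
  | proc hij => exact hij
  | msg => omega

theorem WordHb.lt {w : List (Act P M)} {i j : ℕ} (h : WordHb w i j) : i < j :=
  Relation.TransGen.trans_induction_on h (fun h => h.lt) fun _ _ => lt_trans

end RSCWord

section HappensBefore

variable {P M : Type} [DecidableEq P] {e : Exec P M}

open Exec

theorem exists_hbBase_of_wordHbStep (he : e ∈ RSCexec) {i j : ℕ} (h : WordHbStep e.w i j) :
    ∃ ev₁ ev₂, e.evOf i = some ev₁ ∧ e.evOf j = some ev₂ ∧ e.toMSC.hbBase ev₁ ev₂ := by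
  cases h with
  | proc hij ha hb hab =>
    rename_i a b
    have hlen : procCount e.w j a.proc < (e.toMSC.w a.proc).length := by
      have := toMSC_act?_eq (e := e) hb
      rw [← hab] at this
      exact (List.getElem?_eq_some_iff.1 this).1
    refine ⟨_, _, evOf_eq ha, by rw [evOf_eq hb, ← hab], ?_⟩
    exact .proc _ _ _ ((procCount_lt_procCount_iff ha).2 hij) hlen
  | msg hs hr =>
    rename_i p q m
    have hsrc : e.src (i + 1) = i := by rw [he.2 (i + 1) ⟨p, q, m, hr⟩]; rfl
    have hstep := MSC.hbBase.msg _ ⟨p, q, m, toMSC_act?_eq (e := e) hr⟩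
    rw [show (Act.rcv p q m).proc = q from rfl, toMSC_src_eq he.1 hr, hsrc] at hstep
    exact ⟨_, _, evOf_eq hs, evOf_eq hr, hstep⟩

theorem wordHbStep_of_hbBase (he : e ∈ RSCexec) {ev ev' : P × ℕ} {i j : ℕ}
    (h : e.toMSC.hbBase ev ev') (hi : e.evOf i = some ev) (hj : e.evOf j = some ev') :
    WordHbStep e.w i j := by
  obtain ⟨b, hb, hev'⟩ := evOf_eq_some_iff.1 hj
  cases h with
  | proc p ki kj hk _ =>
    obtain ⟨a, ha, hev⟩ := evOf_eq_some_iff.1 hi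
    obtain ⟨hpa, rfl⟩ := Prod.ext_iff.1 hev
    obtain ⟨hpb, rfl⟩ := Prod.ext_iff.1 hev'
    simp only at hpa hpb
    subst hpa
    exact .proc ((procCount_lt_procCount_iff ha).1 (by simpa [hpb] using hk)) ha hb hpb
  | msg _ hrecv =>
    obtain ⟨p, q, m, hrv⟩ := hrecv
    subst hev'
    obtain rfl : b = .rcv p q m := Option.some_injective _ ((toMSC_act?_eq hb).symm.trans hrv)
    obtain ⟨hlt, hsnd⟩ := he.1.1 j p q m hb
    have hsrc : e.src j = j - 1 := he.2 j ⟨p, q, m, hb⟩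
    rw [show (Act.rcv p q m).proc = q from rfl, toMSC_src_eq he.1 hb] at hi
    obtain rfl : i = e.src j := eq_of_evOf_eq hi (evOf_eq hsnd)
    rw [hsrc] at hsnd ⊢
    have hj : j - 1 + 1 = j := by omega
    have hmsg := WordHbStep.msg hsnd (show e.w[j - 1 + 1]? = _ by rw [hj]; exact hb)
    rwa [hj] at hmsg

theorem exists_evOf_eq_of_hbBase {ev ev' : P × ℕ} (h : e.toMSC.hbBase ev ev') :
    ∃ j, e.evOf j = some ev' := by
  cases h with
  | proc p i j _ hj =>
    obtain ⟨j, _, hev⟩ := exists_evOf_eq_of_toMSC_act? (e := e) (ev := (p, j))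
      (List.getElem?_eq_getElem hj)
    exact ⟨j, hev⟩
  | msg _ hrecv =>
    obtain ⟨p, q, m, hrv⟩ := hrecv
    obtain ⟨j, _, hev⟩ := exists_evOf_eq_of_toMSC_act? hrv
    exact ⟨j, hev⟩

theorem wordHb_iff_hbM (he : e ∈ RSCexec) {i j : ℕ} : WordHb e.w i j ↔ e.hbM i j := by
  constructor
  · intro h
    induction h with
    | single h =>
      obtain ⟨ev₁, ev₂, h₁, h₂, hb⟩ := exists_hbBase_of_wordHbStep he h
      exact ⟨ev₁, ev₂, h₁, h₂, .single hb⟩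
    | tail _ h ih =>
      obtain ⟨ev₁, evk, h₁, hk, hb⟩ := ih
      obtain ⟨evk', ev₂, hk', h₂, hb'⟩ := exists_hbBase_of_wordHbStep he h
      obtain rfl : evk' = evk := Option.some_injective _ (hk'.symm.trans hk)
      exact ⟨ev₁, ev₂, h₁, h₂, hb.tail hb'⟩
  · rintro ⟨ev₁, ev₂, h₁, h₂, hb⟩
    induction hb using Relation.TransGen.head_induction_on generalizing i with
    | single hb => exact .single (wordHbStep_of_hbBase he hb h₁ h₂)
    | head hb _ ih =>
      obtain ⟨k, hk⟩ := exists_evOf_eq_of_hbBase hb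
      exact .head (wordHbStep_of_hbBase he hb h₁ hk) (ih hk)

end HappensBefore

section Violations

variable {P M : Type}

/-- In an RSC word such a send is unmatched, in the word and in all its extensions; whether the
last letter is matched is not yet decided. -/
def IsOrphanSend (w : List (Act P M)) (s : ℕ) (p q : P) : Prop :=
  ∃ m, w[s]? = some (.snd p q m) ∧ s + 1 < w.length ∧ w[s + 1]? ≠ some (.rcv p q m)

def IsMatchedSend (w : List (Act P M)) (s : ℕ) (p q : P) : Prop :=
  ∃ m, w[s]? = some (.snd p q m) ∧ w[s + 1]? = some (.rcv p q m)

def AllSendsMatched (w : List (Act P M)) : Prop :=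
  ∀ i p q m, w[i]? = some (.snd p q m) → w[i + 1]? = some (.rcv p q m)

def P2PViolation (w : List (Act P M)) : Prop :=
  ∃ p q s₁ s₂, s₁ < s₂ ∧ IsOrphanSend w s₁ p q ∧ IsMatchedSend w s₂ p q

def CausalViolation (w : List (Act P M)) : Prop :=
  ∃ p₁ p₂ q s₁ s₂, WordHb w s₁ s₂ ∧ IsOrphanSend w s₁ p₁ q ∧ IsMatchedSend w s₂ p₂ q

theorem ofWord_mem_synch {w : List (Act P M)} (hw : IsRSCWord w) (hall : AllSendsMatched w) :
    Exec.ofWord w ∈ synch :=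
  ⟨(Exec.ofWord_mem_RSCexec hw).1, fun s ⟨p, q, m, hs⟩ =>
    ⟨⟨p, q, m, hall s p q m hs⟩, Nat.add_sub_cancel _ _⟩⟩

theorem ofWord_mem_p2p {w : List (Act P M)} (hw : IsRSCWord w) (hv : ¬ P2PViolation w) :
    Exec.ofWord w ∈ p2p := by
  have hrsc := Exec.ofWord_mem_RSCexec hw
  refine ⟨hrsc.1, fun s₁ s₂ p q m₁ m₂ h₁ h₂ hlt => ?_⟩
  by_cases hm : (Exec.ofWord w).Matched s₂
  · have hr₂ : w[s₂ + 1]? = some (.rcv p q m₂) := (matched_iff_of_mem_RSCexec hrsc h₂).1 hm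
    have hr₁ : w[s₁ + 1]? = some (.rcv p q m₁) := by
      by_contra hr₁
      have hlen := (List.getElem?_eq_some_iff.1 hr₂).1
      exact hv ⟨p, q, s₁, s₂, hlt, ⟨m₁, h₁, by omega, hr₁⟩, ⟨m₂, h₂, hr₂⟩⟩
    exact Or.inr ⟨s₁ + 1, s₂ + 1, by omega, ⟨p, q, m₁, hr₁⟩, ⟨p, q, m₂, hr₂⟩,
      Nat.add_sub_cancel _ _, Nat.add_sub_cancel _ _⟩
  · exact Or.inl hm

end Violations

section Linearisations

variable {P M : Type} [DecidableEq P]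

open Exec

def rscLang (Com : Set (Exec P M)) : Language (Act P M) :=
  {w | ∃ e ∈ RSCexec, e.w = w ∧ e.toMSC ∈ MSCModel Com ∩ MSCrsc}

theorem RegSCmodel.of_isRegular {Com : Set (Exec P M)} (h : (rscLang Com).IsRegular) :
    RegSCmodel Com := by
  obtain ⟨σ, hσ, A, hA⟩ := h
  exact ⟨σ, hσ, A.toNFA, fun w => by rw [DFA.toNFA_correct, hA]; rfl⟩

/-- `src` is junk on sends, so an RSC execution is not determined by its word: `hlin` has to
cover every RSC execution, not only `Exec.ofWord w`. -/
theorem rscLang_eq {Com : Set (Exec P M)} {Good : List (Act P M) → Prop}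
    (hofWord : ∀ w, IsRSCWord w → Good w → Exec.ofWord w ∈ Com)
    (hlin : ∀ {e e' : Exec P M}, e ∈ RSCexec → e'.WF → e'.toMSC = e.toMSC → e' ∈ Com →
      Good e.w) :
    rscLang Com = {w | IsRSCWord w ∧ Good w} := by
  ext w
  constructor
  · rintro ⟨e, he, rfl, ⟨e', ⟨hwf', hM⟩, he'⟩, -⟩
    exact ⟨isRSCWord_of_mem_RSCexec he, hlin he hwf' hM he'⟩
  · rintro ⟨hw, hgood⟩
    have hrsc := Exec.ofWord_mem_RSCexec hw
    exact ⟨_, hrsc, rfl, ⟨_, ⟨hrsc.1, rfl⟩, hofWord w hw hgood⟩, _, hrsc, rfl⟩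

theorem allSendsMatched_of_toMSC_eq {e e' : Exec P M} (he : e ∈ RSCexec) (hwf' : e'.WF)
    (hM : e'.toMSC = e.toMSC) (he' : e' ∈ synch) : AllSendsMatched e.w := by
  intro i p q m hi
  obtain ⟨s', hs', -, hmatched⟩ := exists_pos_of_toMSC_eq he.1 hwf' hM hi
  obtain ⟨hrecv, hsrc⟩ := he'.2 s' ⟨p, q, m, hs'⟩
  exact (matched_iff_of_mem_RSCexec he hi).1 (hmatched.2 ⟨s' + 1, hrecv, hsrc⟩)

theorem not_p2pViolation_of_toMSC_eq {e e' : Exec P M} (he : e ∈ RSCexec) (hwf' : e'.WF)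
    (hM : e'.toMSC = e.toMSC) (he' : e' ∈ p2p) : ¬ P2PViolation e.w := by
  rintro ⟨p, q, s₁, s₂, hlt, ⟨m₁, h₁, -, hn₁⟩, ⟨m₂, h₂, hr₂⟩⟩
  obtain ⟨s₁', h₁', hk₁, hm₁⟩ := exists_pos_of_toMSC_eq he.1 hwf' hM h₁
  obtain ⟨s₂', h₂', hk₂, hm₂⟩ := exists_pos_of_toMSC_eq he.1 hwf' hM h₂
  have hk₁ : procCount e'.w s₁' p = procCount e.w s₁ p := hk₁
  have hk₂ : procCount e'.w s₂' p = procCount e.w s₂ p := hk₂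
  have hlt' : s₁' < s₂' := by
    rw [← procCount_lt_procCount_iff h₁']
    show procCount e'.w s₁' p < procCount e'.w s₂' p
    rw [hk₁, hk₂]
    exact (procCount_lt_procCount_iff h₁).2 hlt
  rcases he'.2 s₁' s₂' p q m₁ m₂ h₁' h₂' hlt' with hnm | ⟨r₁, -, -, hr₁, -, hsrc₁, -⟩
  · exact hnm (hm₂.1 ((matched_iff_of_mem_RSCexec he h₂).2 hr₂))
  · exact hn₁ ((matched_iff_of_mem_RSCexec he h₁).1 (hm₁.2 ⟨r₁, hr₁, hsrc₁⟩))

theorem ofWord_mem_causal {w : List (Act P M)} (hw : IsRSCWord w) (hv : ¬ CausalViolation w) :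
    Exec.ofWord w ∈ causal := by
  have hrsc := Exec.ofWord_mem_RSCexec hw
  refine ⟨hrsc.1, fun s₁ s₂ p₁ p₂ q m₁ m₂ h₁ h₂ hhb => ?_⟩
  by_cases hm : (Exec.ofWord w).Matched s₂
  · have hr₂ : w[s₂ + 1]? = some (.rcv p₂ q m₂) := (matched_iff_of_mem_RSCexec hrsc h₂).1 hm
    have hb : WordHb w s₁ s₂ := (wordHb_iff_hbM hrsc).2 hhb
    have hr₁ : w[s₁ + 1]? = some (.rcv p₁ q m₁) := by
      by_contra hr₁
      have hlen := (List.getElem?_eq_some_iff.1 hr₂).1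
      have hlt := hb.lt
      exact hv ⟨p₁, p₂, q, s₁, s₂, hb, ⟨m₁, h₁, by omega, hr₁⟩, ⟨m₂, h₂, hr₂⟩⟩
    refine Or.inr ⟨s₁ + 1, s₂ + 1, (wordHb_iff_hbM hrsc).1 (.single ?_), ⟨p₁, q, m₁, hr₁⟩,
      ⟨p₂, q, m₂, hr₂⟩, Nat.add_sub_cancel _ _, Nat.add_sub_cancel _ _⟩
    exact .proc (by have := hb.lt; omega) hr₁ hr₂ rfl
  · exact Or.inl hm

theorem not_causalViolation_of_toMSC_eq {e e' : Exec P M} (he : e ∈ RSCexec) (hwf' : e'.WF)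
    (hM : e'.toMSC = e.toMSC) (he' : e' ∈ causal) : ¬ CausalViolation e.w := by
  rintro ⟨p₁, p₂, q, s₁, s₂, hb, ⟨m₁, h₁, -, hn₁⟩, ⟨m₂, h₂, hr₂⟩⟩
  obtain ⟨s₁', h₁', hk₁, hm₁⟩ := exists_pos_of_toMSC_eq he.1 hwf' hM h₁
  obtain ⟨s₂', h₂', hk₂, hm₂⟩ := exists_pos_of_toMSC_eq he.1 hwf' hM h₂
  obtain ⟨ev₁, ev₂, hev₁, hev₂, hhb⟩ := (wordHb_iff_hbM he).1 hb
  have hhb' : e'.hbM s₁' s₂' := by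
    refine ⟨ev₁, ev₂, ?_, ?_, hM ▸ hhb⟩
    · rw [evOf_eq h₁', hk₁, ← evOf_eq h₁, hev₁]
    · rw [evOf_eq h₂', hk₂, ← evOf_eq h₂, hev₂]
  rcases he'.2 s₁' s₂' p₁ p₂ q m₁ m₂ h₁' h₂' hhb' with hnm | ⟨r₁, -, -, hr₁, -, hsrc₁, -⟩
  · exact hnm (hm₂.1 ((matched_iff_of_mem_RSCexec he h₂).2 hr₂))
  · exact hn₁ ((matched_iff_of_mem_RSCexec he h₁).1 (hm₁.2 ⟨r₁, hr₁, hsrc₁⟩))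

end Linearisations

section Snoc

variable {P M : Type} {w : List (Act P M)} {a : Act P M}

open Relation

theorem isRSCWord_append :
    IsRSCWord (w ++ [a]) ↔
      IsRSCWord w ∧ ∀ p q m, a = .rcv p q m → w.getLast? = some (.snd p q m) := by
  constructor
  · intro h
    refine ⟨fun i p q m hi => ?_, ?_⟩
    · have hlt := (List.getElem?_eq_some_iff.1 hi).1
      obtain ⟨j, rfl, hj⟩ := h i p q m (by rwa [List.getElem?_append_left hlt])
      exact ⟨j, rfl, by rwa [List.getElem?_append_left (by omega)] at hj⟩
    · rintro p q m rfl
      obtain ⟨j, hj, hs⟩ := h w.length p q m List.getElem?_concat_length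
      rw [List.getElem?_append_left (by omega)] at hs
      exact List.getLast?_eq_some_iff_getElem?.2 ⟨by omega, by rwa [show w.length - 1 = j by omega]⟩
  · rintro ⟨hw, ha⟩ i p q m hi
    have hlt := (List.getElem?_eq_some_iff.1 hi).1
    simp only [List.length_append, List.length_singleton] at hlt
    rcases Nat.lt_or_ge i w.length with hi' | hi'
    · rw [List.getElem?_append_left hi'] at hi
      obtain ⟨j, rfl, hj⟩ := hw _ p q m hi
      exact ⟨j, rfl, by rwa [List.getElem?_append_left (by omega)]⟩
    · obtain rfl : i = w.length := by omega
      rw [List.getElem?_concat_length] at hi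
      obtain ⟨hpos, hl⟩ := List.getLast?_eq_some_iff_getElem?.1 (ha p q m (Option.some_injective _ hi))
      exact ⟨w.length - 1, by omega, by rwa [List.getElem?_append_left (by omega)]⟩

theorem isOrphanSend_append {s : ℕ} {p q : P} :
    IsOrphanSend (w ++ [a]) s p q ↔ IsOrphanSend w s p q ∨
      s + 1 = w.length ∧ ∃ m, w.getLast? = some (.snd p q m) ∧ a ≠ .rcv p q m := by
  simp only [IsOrphanSend, List.length_append, List.length_singleton]
  constructor
  · rintro ⟨m, hs, hlt, hn⟩
    rw [List.getElem?_append_left (by omega)] at hs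
    rcases Nat.lt_or_ge (s + 1) w.length with h | h
    · exact Or.inl ⟨m, hs, h, by rwa [List.getElem?_append_left h] at hn⟩
    · obtain h : s + 1 = w.length := by omega
      rw [h, List.getElem?_concat_length] at hn
      exact Or.inr ⟨h, m, List.getLast?_eq_some_iff_getElem?.2 ⟨by omega, by rwa [← h]⟩,
        fun ha => hn (by rw [ha])⟩
  · rintro (⟨m, hs, hlt, hn⟩ | ⟨h, m, hl, hn⟩)
    · exact ⟨m, by rwa [List.getElem?_append_left (by omega)], by omega,
        by rwa [List.getElem?_append_left hlt]⟩
    · obtain ⟨hpos, hl⟩ := List.getLast?_eq_some_iff_getElem?.1 hl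
      refine ⟨m, by rwa [List.getElem?_append_left (by omega), show s = w.length - 1 by omega],
        by omega, ?_⟩
      rw [h, List.getElem?_concat_length]
      exact fun ha => hn (Option.some_injective _ ha)

theorem isMatchedSend_append {s : ℕ} {p q : P} :
    IsMatchedSend (w ++ [a]) s p q ↔ IsMatchedSend w s p q ∨
      s + 1 = w.length ∧ ∃ m, w.getLast? = some (.snd p q m) ∧ a = .rcv p q m := by
  simp only [IsMatchedSend]
  constructor
  · rintro ⟨m, hs, hr⟩
    have hlt := (List.getElem?_eq_some_iff.1 hr).1
    simp only [List.length_append, List.length_singleton] at hlt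
    rw [List.getElem?_append_left (by omega)] at hs
    rcases Nat.lt_or_ge (s + 1) w.length with h | h
    · exact Or.inl ⟨m, hs, by rwa [List.getElem?_append_left h] at hr⟩
    · obtain h : s + 1 = w.length := by omega
      rw [h, List.getElem?_concat_length] at hr
      exact Or.inr ⟨h, m, List.getLast?_eq_some_iff_getElem?.2 ⟨by omega, by rwa [← h]⟩,
        Option.some_injective _ hr⟩
  · rintro (⟨m, hs, hr⟩ | ⟨h, m, hl, rfl⟩)
    · have hlt := (List.getElem?_eq_some_iff.1 hr).1
      exact ⟨m, by rwa [List.getElem?_append_left (by omega)],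
        by rwa [List.getElem?_append_left hlt]⟩
    · obtain ⟨hpos, hl⟩ := List.getLast?_eq_some_iff_getElem?.1 hl
      exact ⟨m, by rwa [List.getElem?_append_left (by omega), show s = w.length - 1 by omega],
        by rw [h, List.getElem?_concat_length]⟩

theorem IsMatchedSend.succ_lt {s : ℕ} {p q : P} (h : IsMatchedSend w s p q) :
    s + 1 < w.length :=
  have ⟨_, _, hr⟩ := h
  (List.getElem?_eq_some_iff.1 hr).1

def HasOrphanSend (w : List (Act P M)) (p q : P) : Prop := ∃ s, IsOrphanSend w s p q

theorem hasOrphanSend_append {p q : P} :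
    HasOrphanSend (w ++ [a]) p q ↔ HasOrphanSend w p q ∨
      ∃ m, w.getLast? = some (.snd p q m) ∧ a ≠ .rcv p q m := by
  simp only [HasOrphanSend, isOrphanSend_append]
  constructor
  · rintro ⟨s, hs | ⟨-, hl⟩⟩
    exacts [Or.inl ⟨s, hs⟩, Or.inr hl]
  · rintro (⟨s, hs⟩ | hl)
    · exact ⟨s, Or.inl hs⟩
    · have := (List.getLast?_eq_some_iff_getElem?.1 hl.choose_spec.1).1
      exact ⟨w.length - 1, Or.inr ⟨by omega, hl⟩⟩

theorem allSendsMatched_iff :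
    AllSendsMatched w ↔
      (∀ p q, ¬ HasOrphanSend w p q) ∧ ∀ p q m, w.getLast? ≠ some (.snd p q m) := by
  constructor
  · intro h
    refine ⟨fun p q ⟨s, m, hs, _, hn⟩ => hn (h s p q m hs), fun p q m hl => ?_⟩
    obtain ⟨hpos, hl⟩ := List.getLast?_eq_some_iff_getElem?.1 hl
    have := h _ p q m hl
    rw [show w.length - 1 + 1 = w.length by omega, List.getElem?_eq_none le_rfl] at this
    exact absurd this (by simp)
  · rintro ⟨horph, hlast⟩ i p q m hi
    by_contra hn
    have hlt := (List.getElem?_eq_some_iff.1 hi).1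
    rcases Nat.lt_or_ge (i + 1) w.length with h | h
    · exact horph p q ⟨i, m, hi, h, hn⟩
    · exact hlast p q m
        (List.getLast?_eq_some_iff_getElem?.2 ⟨by omega, by rwa [show w.length - 1 = i by omega]⟩)

theorem p2pViolation_append :
    P2PViolation (w ++ [a]) ↔ P2PViolation w ∨
      ∃ p q m, w.getLast? = some (.snd p q m) ∧ a = .rcv p q m ∧ HasOrphanSend w p q := by
  constructor
  · rintro ⟨p, q, s₁, s₂, hlt, ho, hm⟩
    rcases isMatchedSend_append.1 hm with hm | ⟨h₂, m, hl, rfl⟩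
    · refine Or.inl ⟨p, q, s₁, s₂, hlt, ?_, hm⟩
      have := hm.succ_lt
      exact (isOrphanSend_append.1 ho).resolve_right (by omega)
    · refine Or.inr ⟨p, q, m, hl, rfl, s₁, ?_⟩
      exact (isOrphanSend_append.1 ho).resolve_right (by omega)
  · rintro (⟨p, q, s₁, s₂, hlt, ho, hm⟩ | ⟨p, q, m, hl, rfl, s₁, ho⟩)
    · exact ⟨p, q, s₁, s₂, hlt, isOrphanSend_append.2 (Or.inl ho),
        isMatchedSend_append.2 (Or.inl hm)⟩
    · have := ho.choose_spec.2.1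
      have := (List.getLast?_eq_some_iff_getElem?.1 hl).1
      exact ⟨p, q, s₁, w.length - 1, by omega, isOrphanSend_append.2 (Or.inl ho),
        isMatchedSend_append.2 (Or.inr ⟨by omega, m, hl, rfl⟩)⟩

theorem wordHbStep_iff {i j : ℕ} :
    WordHbStep w i j ↔
      (∃ b c, i < j ∧ w[i]? = some b ∧ w[j]? = some c ∧ b.proc = c.proc) ∨
        j = i + 1 ∧ ∃ p q m, w[i]? = some (.snd p q m) ∧ w[j]? = some (.rcv p q m) := by
  constructor
  · rintro (⟨hij, hb, hc, hp⟩ | ⟨hs, hr⟩)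
    exacts [Or.inl ⟨_, _, hij, hb, hc, hp⟩, Or.inr ⟨rfl, _, _, _, hs, hr⟩]
  · rintro (⟨b, c, hij, hb, hc, hp⟩ | ⟨rfl, p, q, m, hs, hr⟩)
    exacts [.proc hij hb hc hp, .msg hs hr]

theorem wordHbStep_append_iff {i j : ℕ} (hj : j < w.length) :
    WordHbStep (w ++ [a]) i j ↔ WordHbStep w i j := by
  have hi : ∀ i, i ≤ j → (w ++ [a])[i]? = w[i]? := fun i hi =>
    List.getElem?_append_left (by omega)
  constructor
  · intro h
    have hij := h.lt
    simpa only [wordHbStep_iff, hi i hij.le, hi j le_rfl] using h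
  · intro h
    have hij := h.lt
    simpa only [wordHbStep_iff, hi i hij.le, hi j le_rfl] using h

theorem reflTransGen_append_iff {i j : ℕ} (hj : j < w.length) :
    ReflTransGen (WordHbStep (w ++ [a])) i j ↔ ReflTransGen (WordHbStep w) i j := by
  constructor
  · intro h
    induction h with
    | refl => exact .refl
    | tail _ hstep ih =>
      have := hstep.lt
      exact .tail (ih (by omega)) ((wordHbStep_append_iff hj).1 hstep)
  · intro h
    induction h with
    | refl => exact .refl
    | tail _ hstep ih =>
      have := hstep.lt
      exact .tail (ih (by omega)) ((wordHbStep_append_iff hj).2 hstep)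

theorem wordHb_append_iff {i j : ℕ} (hj : j < w.length) :
    WordHb (w ++ [a]) i j ↔ WordHb w i j := by
  constructor
  · intro h
    induction h with
    | single hstep => exact .single ((wordHbStep_append_iff hj).1 hstep)
    | tail _ hstep ih =>
      have := hstep.lt
      exact .tail (ih (by omega)) ((wordHbStep_append_iff hj).1 hstep)
  · intro h
    induction h with
    | single hstep => exact .single ((wordHbStep_append_iff hj).2 hstep)
    | tail _ hstep ih =>
      have := hstep.lt
      exact .tail (ih (by omega)) ((wordHbStep_append_iff hj).2 hstep)

theorem le_of_reflTransGen_wordHbStep {i j : ℕ} (h : ReflTransGen (WordHbStep w) i j) : i ≤ j := by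
  induction h with
  | refl => exact le_rfl
  | tail _ hstep ih => exact ih.trans hstep.lt.le

theorem reflTransGen_append_length_iff {i : ℕ} :
    ReflTransGen (WordHbStep (w ++ [a])) i w.length ↔ i = w.length ∨
      (∃ k b, ReflTransGen (WordHbStep w) i k ∧ w[k]? = some b ∧ b.proc = a.proc) ∨
      ∃ p q m, a = .rcv p q m ∧ w.getLast? = some (.snd p q m) ∧
        ReflTransGen (WordHbStep w) i (w.length - 1) := by
  constructor
  · intro h
    rcases h.cases_tail with rfl | ⟨k, hik, hstep⟩
    · exact Or.inl rfl
    right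
    rcases wordHbStep_iff.1 hstep with ⟨b, c, hk, hb, hc, hp⟩ | ⟨hk, p, q, m, hs, hr⟩
    · rw [List.getElem?_concat_length] at hc
      obtain rfl := Option.some_injective _ hc
      rw [List.getElem?_append_left hk] at hb
      exact Or.inl ⟨k, b, (reflTransGen_append_iff hk).1 hik, hb, hp⟩
    · rw [List.getElem?_concat_length] at hr
      rw [List.getElem?_append_left (by omega)] at hs
      rw [show w.length - 1 = k by omega]
      exact Or.inr ⟨p, q, m, Option.some_injective _ hr,
        List.getLast?_eq_some_iff_getElem?.2 ⟨by omega, by rwa [show w.length - 1 = k by omega]⟩,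
        (reflTransGen_append_iff (by omega)).1 hik⟩
  · rintro (rfl | ⟨k, b, hik, hb, hp⟩ | ⟨p, q, m, rfl, hl, hik⟩)
    · exact .refl
    · have hk := (List.getElem?_eq_some_iff.1 hb).1
      exact .tail ((reflTransGen_append_iff hk).2 hik)
        (.proc hk (by rwa [List.getElem?_append_left hk]) List.getElem?_concat_length hp)
    · obtain ⟨hpos, hl⟩ := List.getLast?_eq_some_iff_getElem?.1 hl
      have hstep : WordHbStep (w ++ [.rcv p q m]) (w.length - 1) (w.length - 1 + 1) :=
        .msg (by rwa [List.getElem?_append_left (by omega)])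
          (by rw [Nat.sub_add_cancel hpos]; exact List.getElem?_concat_length)
      rw [Nat.sub_add_cancel hpos] at hstep
      exact .tail ((reflTransGen_append_iff (by omega)).2 hik) hstep

/-- What an automaton has to remember of the causal past of a word: which processes `r` have
an event causally after (or equal to) an orphan send to `q`. -/
def OrphanPrecedes (w : List (Act P M)) (q r : P) : Prop :=
  ∃ s p j b, IsOrphanSend w s p q ∧ w[j]? = some b ∧ b.proc = r ∧
    ReflTransGen (WordHbStep w) s j

theorem OrphanPrecedes.exists_reflTransGen_last {q : P} {b : Act P M}
    (h : OrphanPrecedes w q b.proc) (hl : w.getLast? = some b) :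
    ∃ s p, IsOrphanSend w s p q ∧ ReflTransGen (WordHbStep w) s (w.length - 1) := by
  obtain ⟨s, p, j, c, ho, hj, hcb, hsj⟩ := h
  obtain ⟨hpos, hl⟩ := List.getLast?_eq_some_iff_getElem?.1 hl
  have hjlt := (List.getElem?_eq_some_iff.1 hj).1
  refine ⟨s, p, ho, ?_⟩
  rcases Nat.lt_or_ge j (w.length - 1) with hlt | hge
  · exact .tail hsj (.proc hlt hj hl hcb)
  · rwa [show w.length - 1 = j by omega]

theorem exists_orphanSend_reflTransGen_length_iff {q : P} :
    (∃ s p, IsOrphanSend (w ++ [a]) s p q ∧ ReflTransGen (WordHbStep (w ++ [a])) s w.length) ↔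
      OrphanPrecedes w q a.proc ∨
      (∃ p q' m, a = .rcv p q' m ∧ w.getLast? = some (.snd p q' m) ∧ OrphanPrecedes w q p) ∨
      ∃ m, w.getLast? = some (.snd a.proc q m) ∧ a ≠ .rcv a.proc q m := by
  constructor
  · rintro ⟨s, p, ho, hsj⟩
    rcases reflTransGen_append_length_iff.1 hsj with rfl | ⟨k, c, hsk, hc, hcp⟩ |
      ⟨p', q', m', rfl, hl, hsl⟩
    · obtain ⟨_, _, hlt, _⟩ := ho
      simp at hlt
    · rcases isOrphanSend_append.1 ho with ho | ⟨hs, m, hl, hn⟩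
      · exact Or.inl ⟨s, p, k, c, ho, hc, hcp, hsk⟩
      · have := le_of_reflTransGen_wordHbStep hsk
        have hk := (List.getElem?_eq_some_iff.1 hc).1
        obtain ⟨-, hl'⟩ := List.getLast?_eq_some_iff_getElem?.1 hl
        rw [show w.length - 1 = k by omega, hc] at hl'
        obtain rfl := Option.some_injective _ hl'
        rw [← hcp]
        exact Or.inr (Or.inr ⟨m, hl, hn⟩)
    · rcases isOrphanSend_append.1 ho with ho | ⟨hs, m, hl', hn⟩
      · obtain ⟨hpos, hlast⟩ := List.getLast?_eq_some_iff_getElem?.1 hl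
        exact Or.inr (Or.inl ⟨p', q', m', rfl, hl, s, p, _, _, ho, hlast, rfl, hsl⟩)
      · obtain ⟨rfl, rfl, rfl⟩ : p' = p ∧ q' = q ∧ m' = m := by simpa using hl.symm.trans hl'
        exact absurd rfl hn
  · rintro (⟨s, p, k, c, ho, hc, hcp, hsk⟩ | ⟨p', q', m', rfl, hl, hprec⟩ | ⟨m, hl, hn⟩)
    · exact ⟨s, p, isOrphanSend_append.2 (Or.inl ho),
        reflTransGen_append_length_iff.2 (Or.inr (Or.inl ⟨k, c, hsk, hc, hcp⟩))⟩
    · obtain ⟨s, p, ho, hsl⟩ := OrphanPrecedes.exists_reflTransGen_last (b := .snd p' q' m')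
        hprec hl
      exact ⟨s, p, isOrphanSend_append.2 (Or.inl ho),
        reflTransGen_append_length_iff.2 (Or.inr (Or.inr ⟨p', q', m', rfl, hl, hsl⟩))⟩
    · obtain ⟨hpos, hlast⟩ := List.getLast?_eq_some_iff_getElem?.1 hl
      exact ⟨w.length - 1, a.proc, isOrphanSend_append.2 (Or.inr ⟨by omega, m, hl, hn⟩),
        reflTransGen_append_length_iff.2 (Or.inr (Or.inl ⟨_, _, .refl, hlast, rfl⟩))⟩

theorem orphanPrecedes_append {q r : P} :
    OrphanPrecedes (w ++ [a]) q r ↔ OrphanPrecedes w q r ∨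
      r = a.proc ∧ (OrphanPrecedes w q a.proc ∨
        ∃ p q' m, a = .rcv p q' m ∧ w.getLast? = some (.snd p q' m) ∧ OrphanPrecedes w q p) ∨
      ∃ m, w.getLast? = some (.snd r q m) ∧ a ≠ .rcv r q m := by
  constructor
  · rintro ⟨s, p, j, b, ho, hj, rfl, hsj⟩
    have hjlt := (List.getElem?_eq_some_iff.1 hj).1
    simp only [List.length_append, List.length_singleton] at hjlt
    rcases Nat.lt_or_ge j w.length with hj' | hj'
    · rw [List.getElem?_append_left hj'] at hj
      have hsj := (reflTransGen_append_iff hj').1 hsj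
      rcases isOrphanSend_append.1 ho with ho | ⟨hs, m, hl, hn⟩
      · exact Or.inl ⟨s, p, j, b, ho, hj, rfl, hsj⟩
      · have := le_of_reflTransGen_wordHbStep hsj
        obtain ⟨-, hl'⟩ := List.getLast?_eq_some_iff_getElem?.1 hl
        rw [show w.length - 1 = j by omega, hj] at hl'
        obtain rfl := Option.some_injective _ hl'
        exact Or.inr (Or.inr ⟨m, hl, hn⟩)
    obtain rfl : j = w.length := by omega
    obtain rfl := Option.some_injective _ (List.getElem?_concat_length.symm.trans hj)
    rcases exists_orphanSend_reflTransGen_length_iff.1 ⟨s, p, ho, hsj⟩ with h | h | h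
    exacts [Or.inr (Or.inl ⟨rfl, Or.inl h⟩), Or.inr (Or.inl ⟨rfl, Or.inr h⟩), Or.inr (Or.inr h)]
  · rintro (⟨s, p, j, b, ho, hj, hbr, hsj⟩ | ⟨rfl, hprec⟩ | ⟨m, hl, hn⟩)
    · have hjlt := (List.getElem?_eq_some_iff.1 hj).1
      exact ⟨s, p, j, b, isOrphanSend_append.2 (Or.inl ho),
        by rwa [List.getElem?_append_left hjlt], hbr, (reflTransGen_append_iff hjlt).2 hsj⟩
    · obtain ⟨s, p, ho, hsj⟩ :=
        exists_orphanSend_reflTransGen_length_iff.2 (hprec.elim Or.inl (Or.inr ∘ Or.inl))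
      exact ⟨s, p, w.length, a, ho, List.getElem?_concat_length, rfl, hsj⟩
    · obtain ⟨hpos, hlast⟩ := List.getLast?_eq_some_iff_getElem?.1 hl
      exact ⟨w.length - 1, r, w.length - 1, .snd r q m,
        isOrphanSend_append.2 (Or.inr ⟨by omega, m, hl, hn⟩),
        by rwa [List.getElem?_append_left (by omega)], rfl, .refl⟩

theorem causalViolation_append :
    CausalViolation (w ++ [a]) ↔ CausalViolation w ∨
      ∃ p q m, w.getLast? = some (.snd p q m) ∧ a = .rcv p q m ∧ OrphanPrecedes w q p := by
  constructor
  · rintro ⟨p₁, p₂, q, s₁, s₂, hb, ho, hm⟩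
    have hlt := hb.lt
    rcases isMatchedSend_append.1 hm with hm | ⟨h₂, m, hl, rfl⟩
    · have := hm.succ_lt
      exact Or.inl ⟨p₁, p₂, q, s₁, s₂, (wordHb_append_iff (by omega)).1 hb,
        (isOrphanSend_append.1 ho).resolve_right (by omega), hm⟩
    · obtain ⟨hpos, hlast⟩ := List.getLast?_eq_some_iff_getElem?.1 hl
      rw [show w.length - 1 = s₂ by omega] at hlast
      exact Or.inr ⟨p₂, q, m, hl, rfl, s₁, p₁, s₂, _,
        (isOrphanSend_append.1 ho).resolve_right (by omega), hlast, rfl,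
        ((wordHb_append_iff (by omega)).1 hb).to_reflTransGen⟩
  · rintro (⟨p₁, p₂, q, s₁, s₂, hb, ho, hm⟩ | ⟨p, q, m, hl, rfl, hprec⟩)
    · have := hm.succ_lt
      exact ⟨p₁, p₂, q, s₁, s₂, (wordHb_append_iff (by omega)).2 hb,
        isOrphanSend_append.2 (Or.inl ho), isMatchedSend_append.2 (Or.inl hm)⟩
    · obtain ⟨s, p₁, ho, hsl⟩ := OrphanPrecedes.exists_reflTransGen_last (b := .snd p q m) hprec hl
      obtain ⟨hpos, -⟩ := List.getLast?_eq_some_iff_getElem?.1 hl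
      have hs := ho.choose_spec.2.1
      have hb : WordHb w s (w.length - 1) :=
        (reflTransGen_iff_eq_or_transGen.1 hsl).resolve_left (by omega)
      exact ⟨p₁, p, q, s, w.length - 1, (wordHb_append_iff (by omega)).2 hb,
        isOrphanSend_append.2 (Or.inl ho), isMatchedSend_append.2 (Or.inr ⟨by omega, m, hl, rfl⟩)⟩

end Snoc

theorem Language.isRegular_of_snoc {α : Type*} {σ : Type} [Finite σ] {L : Language α} (g : List α → σ)
    (f : σ → α → σ) (hg : ∀ w a, g (w ++ [a]) = f (g w) a) (S : Set σ)
    (hL : ∀ w, w ∈ L ↔ g w ∈ S) : L.IsRegular := by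
  let A : DFA α σ := ⟨f, g [], S⟩
  have heval : ∀ w, A.eval w = g w := by
    intro w
    induction w using List.reverseRecOn with
    | nil => rfl
    | append_singleton w a ih => rw [DFA.eval_append_singleton, ih, hg]
  exact ⟨σ, Fintype.ofFinite σ, A, Language.ext fun w => by rw [DFA.mem_accepts, heval, hL]⟩

instance {P M : Type} [Finite P] [Finite M] : Finite (Act P M) :=
  Finite.of_injective
    (fun a : Act P M => match a with
      | .snd p q m => (true, p, q, m)
      | .rcv p q m => (false, p, q, m))
    (by rintro (⟨⟩ | ⟨⟩) (⟨⟩ | ⟨⟩) h <;> simp_all)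

section Regularity

variable {P M : Type} [Finite P] [Finite M]

theorem isRegular_isRSCWord : Language.IsRegular {w : List (Act P M) | IsRSCWord w} :=
  Language.isRegular_of_snoc (fun w => (w.getLast?, IsRSCWord w))
    (fun x a => (some a, x.2 ∧ ∀ p q m, a = .rcv p q m → x.1 = some (.snd p q m)))
    (fun _ _ => Prod.ext List.getLast?_concat (propext isRSCWord_append)) {x | x.2}
    fun _ => Iff.rfl

theorem isRegular_allSendsMatched :
    Language.IsRegular {w : List (Act P M) | AllSendsMatched w} :=
  Language.isRegular_of_snoc (fun w => (w.getLast?, HasOrphanSend w))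
    (fun x a => (some a, fun p q => x.2 p q ∨ ∃ m, x.1 = some (.snd p q m) ∧ a ≠ .rcv p q m))
    (fun _ _ => Prod.ext List.getLast?_concat (funext₂ fun _ _ => propext hasOrphanSend_append))
    {x | (∀ p q, ¬ x.2 p q) ∧ ∀ p q m, x.1 ≠ some (.snd p q m)} fun _ => allSendsMatched_iff

theorem isRegular_p2pViolation : Language.IsRegular {w : List (Act P M) | P2PViolation w} :=
  Language.isRegular_of_snoc (fun w => (w.getLast?, HasOrphanSend w, P2PViolation w))
    (fun x a => (some a, fun p q => x.2.1 p q ∨ ∃ m, x.1 = some (.snd p q m) ∧ a ≠ .rcv p q m,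
      x.2.2 ∨ ∃ p q m, x.1 = some (.snd p q m) ∧ a = .rcv p q m ∧ x.2.1 p q))
    (fun _ _ => Prod.ext List.getLast?_concat <| Prod.ext
      (funext₂ fun _ _ => propext hasOrphanSend_append) (propext p2pViolation_append))
    {x | x.2.2} fun _ => Iff.rfl

theorem isRegular_causalViolation :
    Language.IsRegular {w : List (Act P M) | CausalViolation w} :=
  Language.isRegular_of_snoc (fun w => (w.getLast?, OrphanPrecedes w, CausalViolation w))
    (fun x a => (some a,
      fun q r => x.2.1 q r ∨
        r = a.proc ∧ (x.2.1 q a.proc ∨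
          ∃ p q' m, a = .rcv p q' m ∧ x.1 = some (.snd p q' m) ∧ x.2.1 q p) ∨
        ∃ m, x.1 = some (.snd r q m) ∧ a ≠ .rcv r q m,
      x.2.2 ∨ ∃ p q m, x.1 = some (.snd p q m) ∧ a = .rcv p q m ∧ x.2.1 q p))
    (fun _ _ => Prod.ext List.getLast?_concat <| Prod.ext
      (funext₂ fun _ _ => propext orphanPrecedes_append) (propext causalViolation_append))
    {x | x.2.2} fun _ => Iff.rfl

end Regularity

section Models

variable {P M : Type} [DecidableEq P]

theorem rscLang_bag : rscLang (bag : Set (Exec P M)) = {w | IsRSCWord w} :=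
  (rscLang_eq (Good := fun _ => True) (fun _ hw _ => (Exec.ofWord_mem_RSCexec hw).1)
    fun _ _ _ _ => trivial).trans (Set.ext fun _ => iff_of_eq (and_true _))

theorem rscLang_synch :
    rscLang (synch : Set (Exec P M)) = {w | IsRSCWord w ∧ AllSendsMatched w} :=
  rscLang_eq (fun _ => ofWord_mem_synch) allSendsMatched_of_toMSC_eq

theorem rscLang_p2p : rscLang (p2p : Set (Exec P M)) = {w | IsRSCWord w ∧ ¬ P2PViolation w} :=
  rscLang_eq (fun _ => ofWord_mem_p2p) not_p2pViolation_of_toMSC_eq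

theorem rscLang_causal :
    rscLang (causal : Set (Exec P M)) = {w | IsRSCWord w ∧ ¬ CausalViolation w} :=
  rscLang_eq (fun _ => ofWord_mem_causal) not_causalViolation_of_toMSC_eq

end Models

theorem stmt17_general (P Mg : Type) [Fintype P] [DecidableEq P] [Fintype Mg] :
    RegSCmodel (bag : Set (Exec P Mg)) ∧ RegSCmodel (p2p : Set (Exec P Mg)) ∧
    RegSCmodel (causal : Set (Exec P Mg)) ∧ RegSCmodel (synch : Set (Exec P Mg)) := by
  refine ⟨.of_isRegular ?_, .of_isRegular ?_, .of_isRegular ?_, .of_isRegular ?_⟩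
  · rw [rscLang_bag]
    exact isRegular_isRSCWord
  · rw [rscLang_p2p]
    exact isRegular_isRSCWord.inf isRegular_p2pViolation.compl
  · rw [rscLang_causal]
    exact isRegular_isRSCWord.inf isRegular_causalViolation.compl
  · rw [rscLang_synch]
    exact isRegular_isRSCWord.inf isRegular_allSendsMatched

/-- the communication models `bag`, `p2p`, `causal` and `synch` are RegSC. -/
theorem stmt17 (P Mg : Type) [Fintype P] [DecidableEq P] [Fintype Mg] [DecidableEq Mg] :
    RegSCmodel (bag : Set (Exec P Mg)) ∧ RegSCmodel (p2p : Set (Exec P Mg)) ∧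
    RegSCmodel (causal : Set (Exec P Mg)) ∧ RegSCmodel (synch : Set (Exec P Mg)) :=
  stmt17_general P Mg
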